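/- arXiv:0801.2218 — 5 statements merged into one kernel-verified Lean document; each statement's English description precedes it below -/
import Mathlib

section
/- Let N ≥ 1 and let P_{XY|AB} be a bipartite non-signaling conditional probability distribution with binary outcomes X, Y ∈ {0,1} and inputs A ∈ {0, 2, ..., 2N−2}, B ∈ {1, 3, ..., 2N−1}. Then for every input a, the statistical distance between the marginal output distribution P_{X|A=a} and the uniform distribution on {0,1} is at most I_N/2, where I_N is the chained Bell quantity of P_{XY|AB}; and symmetrically D(P_{Y|B=b}, U_Y) ≤ I_N/2 for every b. -/
open Finset

noncomputable section

/-- `P` is a probability distribution on the finite set `S`. -/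
def IsProbDist {S : Type*} [Fintype S] (P : S → ℝ) : Prop :=
  (∀ x, 0 ≤ P x) ∧ ∑ x, P x = 1

/-- The statistical distance `D(P,Q) = (1/2) ∑_x |P x - Q x|`. -/
def statDist {S : Type*} [Fintype S] (P Q : S → ℝ) : ℝ :=
  (1 / 2) * ∑ x, |P x - Q x|

/-- The chained Bell quantity `I_N` of a bipartite conditional distribution.
Alice's input `a : Fin N` stands for the measurement `2a ∈ {0,2,…,2N-2}` and Bob's input
`b : Fin N` stands for `2b+1 ∈ {1,3,…,2N-1}`; thus `|2a - (2b+1)| = 1` iff `a = b ∨ a = b+1`.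
`I_N = ∑_{a,b : |a-b|=1} ∑_x P(x, x̄ | a, b) + ∑_x P(x, x | 0, 2N-1)`, where `x̄ = 1 - x`. -/
def chainedBell (N : ℕ) (hN : 0 < N) (P : Fin N → Fin N → Fin 2 → Fin 2 → ℝ) : ℝ :=
  (∑ a : Fin N, ∑ b : Fin N,
      if (a : ℕ) = (b : ℕ) ∨ (a : ℕ) = (b : ℕ) + 1 then ∑ x : Fin 2, P a b x (1 - x) else 0)
    + ∑ x : Fin 2, P ⟨0, hN⟩ ⟨N - 1, by omega⟩ x x

/-! ### Auxiliary machinery for the chain argument -/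

/-- Telescoping bound along a chain. -/
lemma tele_aux (u e : ℕ → ℝ) (i : ℕ) : ∀ j, i ≤ j →
    (∀ k, i ≤ k → k < j → |u (k+1) - u k| ≤ e k) →
    |u j - u i| ≤ ∑ k ∈ Finset.Ico i j, e k := by
  intro j hij
  induction j, hij using Nat.le_induction with
  | base => intro _; simp
  | succ j hij ih =>
      intro h
      have h1 := ih (fun k hk hk' => h k hk (by omega))
      have h2 := h j hij (by omega)
      rw [Finset.sum_Ico_succ_top hij]
      have := abs_sub_le (u (j+1)) (u j) (u i)
      linarith

/-- Splitting a sum over `range (2M+1)` into even- and odd-indexed parts. -/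
lemma split_odd_aux (e : ℕ → ℝ) : ∀ M : ℕ, ∑ k ∈ range (2*M+1), e k
    = ∑ j ∈ range (M+1), e (2*j) + ∑ j ∈ range M, e (2*j+1) := by
  intro M
  induction M with
  | zero => simp
  | succ M ih =>
      rw [show 2*(M+1)+1 = (2*M+1) + 1 + 1 by ring, Finset.sum_range_succ,
        Finset.sum_range_succ, ih,
        Finset.sum_range_succ (fun j => e (2*j)) (M+1),
        Finset.sum_range_succ (fun j => e (2*j+1)) M,
        show 2*(M+1) = 2*M+1+1 by ring]
      ring

/-- Statistical distance of a binary distribution from uniform. -/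
lemma statDist_two_aux (m : Fin 2 → ℝ) (h : m 0 + m 1 = 1) :
    statDist m (fun _ => 1/2) = |2 * m 0 - 1| / 2 := by
  unfold statDist
  rw [Fin.sum_univ_two]
  rw [show m 1 - 1/2 = -(m 0 - 1/2) by linarith, abs_neg,
    show 2 * m 0 - 1 = 2 * (m 0 - 1/2) by ring, abs_mul, abs_two]
  ring

section Aux
variable (N : ℕ) (hN : 0 < N) (P : Fin N → Fin N → Fin 2 → Fin 2 → ℝ)

/-- Alice's marginal probability of outcome `0` on input `n` (mod `N`). -/
def mX (n : ℕ) : ℝ := ∑ y, P ⟨n % N, Nat.mod_lt n hN⟩ ⟨0, hN⟩ 0 y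
/-- Bob's marginal probability of outcome `0` on input `n` (mod `N`). -/
def mY (n : ℕ) : ℝ := ∑ x, P ⟨0, hN⟩ ⟨n % N, Nat.mod_lt n hN⟩ x 0
/-- Probability that the outcomes differ for the input pair `(a, b)` (mod `N`). -/
def Qd (a b : ℕ) : ℝ :=
  ∑ x : Fin 2, P ⟨a % N, Nat.mod_lt a hN⟩ ⟨b % N, Nat.mod_lt b hN⟩ x (1 - x)
/-- The chain of marginals `X_0, Y_0, X_1, Y_1, …`. -/
def uu (n : ℕ) : ℝ := if n % 2 = 0 then mX N hN P (n/2) else mY N hN P (n/2)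
/-- The edge weights of the chain. -/
def ee (n : ℕ) : ℝ := if n % 2 = 0 then Qd N hN P (n/2) (n/2) else Qd N hN P (n/2+1) (n/2)

end Aux

lemma sub01_aux : (1 : Fin 2) - 0 = 1 := by decide
lemma sub11_aux : (1 : Fin 2) - 1 = 0 := by decide

lemma edge_aux (N : ℕ) (hN : 0 < N) (P : Fin N → Fin N → Fin 2 → Fin 2 → ℝ)
    (hpos : ∀ a b x y, 0 ≤ P a b x y)
    (hnsX : ∀ a b b' x, ∑ y, P a b x y = ∑ y, P a b' x y)
    (hnsY : ∀ a a' b y, ∑ x, P a b x y = ∑ x, P a' b x y) :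
    ∀ n, n < 2*N - 1 → |uu N hN P (n+1) - uu N hN P n| ≤ ee N hN P n := by
  intro n hn
  rcases Nat.even_or_odd n with ⟨k, hk⟩ | ⟨k, hk⟩
  · -- n = k + k, edge X_k -- Y_k
    have e1 : uu N hN P n = mX N hN P k := by
      unfold uu; rw [if_pos (by omega), show n/2 = k by omega]
    have e2 : uu N hN P (n+1) = mY N hN P k := by
      unfold uu; rw [if_neg (by omega), show (n+1)/2 = k by omega]
    have e3 : ee N hN P n = Qd N hN P k k := by
      unfold ee; rw [if_pos (by omega), show n/2 = k by omega]
    rw [e1, e2, e3]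
    unfold mX mY Qd
    rw [hnsX ⟨k % N, Nat.mod_lt k hN⟩ ⟨0, hN⟩ ⟨k % N, Nat.mod_lt k hN⟩ 0]
    rw [hnsY ⟨0, hN⟩ ⟨k % N, Nat.mod_lt k hN⟩ ⟨k % N, Nat.mod_lt k hN⟩ 0]
    rw [Fin.sum_univ_two, Fin.sum_univ_two, Fin.sum_univ_two, sub01_aux, sub11_aux]
    have h1 := hpos ⟨k % N, Nat.mod_lt k hN⟩ ⟨k % N, Nat.mod_lt k hN⟩ 0 1
    have h2 := hpos ⟨k % N, Nat.mod_lt k hN⟩ ⟨k % N, Nat.mod_lt k hN⟩ 1 0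
    rw [abs_le]; constructor <;> linarith
  · -- n = 2k+1, edge Y_k -- X_{k+1}
    have e1 : uu N hN P n = mY N hN P k := by
      unfold uu; rw [if_neg (by omega), show n/2 = k by omega]
    have e2 : uu N hN P (n+1) = mX N hN P (k+1) := by
      unfold uu; rw [if_pos (by omega), show (n+1)/2 = k+1 by omega]
    have e3 : ee N hN P n = Qd N hN P (k+1) k := by
      unfold ee; rw [if_neg (by omega), show n/2 = k by omega]
    rw [e1, e2, e3]
    unfold mX mY Qd
    rw [hnsY ⟨0, hN⟩ ⟨(k+1) % N, Nat.mod_lt (k+1) hN⟩ ⟨k % N, Nat.mod_lt k hN⟩ 0]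
    rw [hnsX ⟨(k+1) % N, Nat.mod_lt (k+1) hN⟩ ⟨0, hN⟩ ⟨k % N, Nat.mod_lt k hN⟩ 0]
    rw [Fin.sum_univ_two, Fin.sum_univ_two, Fin.sum_univ_two, sub01_aux, sub11_aux]
    have h1 := hpos ⟨(k+1) % N, Nat.mod_lt (k+1) hN⟩ ⟨k % N, Nat.mod_lt k hN⟩ 0 1
    have h2 := hpos ⟨(k+1) % N, Nat.mod_lt (k+1) hN⟩ ⟨k % N, Nat.mod_lt k hN⟩ 1 0
    rw [abs_le]; constructor <;> linarith

lemma endpoint_aux (N : ℕ) (hN : 0 < N) (P : Fin N → Fin N → Fin 2 → Fin 2 → ℝ)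
    (hpos : ∀ a b x y, 0 ≤ P a b x y)
    (htot : ∀ a b, ∑ x : Fin 2, ∑ y : Fin 2, P a b x y = 1)
    (hnsX : ∀ a b b' x, ∑ y, P a b x y = ∑ y, P a b' x y) (h : N - 1 < N) :
    |mX N hN P 0 + mY N hN P (N-1) - 1| ≤ ∑ x : Fin 2, P ⟨0, hN⟩ ⟨N-1, h⟩ x x := by
  have hb : (⟨(N-1) % N, Nat.mod_lt (N-1) hN⟩ : Fin N) = ⟨N-1, h⟩ := by
    ext; simp [Nat.mod_eq_of_lt h]
  have ha : (⟨0 % N, Nat.mod_lt 0 hN⟩ : Fin N) = ⟨0, hN⟩ := by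
    ext; simp
  unfold mX mY
  rw [ha, hb, hnsX ⟨0, hN⟩ ⟨0, hN⟩ ⟨N-1, h⟩ 0]
  have ht := htot ⟨0, hN⟩ ⟨N-1, h⟩
  rw [Fin.sum_univ_two, Fin.sum_univ_two, Fin.sum_univ_two] at ht ⊢
  have h1 := hpos ⟨0, hN⟩ ⟨N-1, h⟩ 0 0
  have h2 := hpos ⟨0, hN⟩ ⟨N-1, h⟩ 1 1
  rw [abs_le]; constructor <;> linarith

lemma chain_sum_aux (N : ℕ) (hN : 0 < N) (P : Fin N → Fin N → Fin 2 → Fin 2 → ℝ) :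
    (∑ a : Fin N, ∑ b : Fin N,
      if (a : ℕ) = (b : ℕ) ∨ (a : ℕ) = (b : ℕ) + 1 then ∑ x : Fin 2, P a b x (1 - x) else 0)
    = ∑ k ∈ range (2*N-1), ee N hN P k := by
  have hL : (∑ a : Fin N, ∑ b : Fin N,
      if (a : ℕ) = (b : ℕ) ∨ (a : ℕ) = (b : ℕ) + 1 then ∑ x : Fin 2, P a b x (1 - x) else 0)
      = ∑ i ∈ range N, ∑ j ∈ range N,
          (if i = j ∨ i = j + 1 then Qd N hN P i j else 0) := by
    rw [← Fin.sum_univ_eq_sum_range (fun i => ∑ j ∈ range N,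
          (if i = j ∨ i = j + 1 then Qd N hN P i j else 0)) N]
    refine Finset.sum_congr rfl fun a _ => ?_
    rw [← Fin.sum_univ_eq_sum_range
      (fun j => (if (a:ℕ) = j ∨ (a:ℕ) = j + 1 then Qd N hN P a j else 0)) N]
    refine Finset.sum_congr rfl fun b _ => ?_
    congr 1
    unfold Qd
    have ha : (⟨(a:ℕ) % N, Nat.mod_lt _ hN⟩ : Fin N) = a := by
      ext; simp [Nat.mod_eq_of_lt a.isLt]
    have hb : (⟨(b:ℕ) % N, Nat.mod_lt _ hN⟩ : Fin N) = b := by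
      ext; simp [Nat.mod_eq_of_lt b.isLt]
    rw [ha, hb]
  rw [hL]
  have hInner : ∀ i ∈ range N, (∑ j ∈ range N, if i = j ∨ i = j + 1 then Qd N hN P i j else 0)
      = Qd N hN P i i + (if 1 ≤ i then Qd N hN P i (i-1) else 0) := by
    intro i hi
    have hps : ∀ j, (if i = j ∨ i = j + 1 then Qd N hN P i j else 0)
        = (if j = i then Qd N hN P i j else 0)
          + (if 1 ≤ i then (if j = i - 1 then Qd N hN P i j else 0) else 0) := by
      intro j
      split_ifs <;> first | (exfalso; omega) | ring1
    rw [Finset.sum_congr rfl (fun j _ => hps j), Finset.sum_add_distrib,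
      Finset.sum_ite_eq' (range N) i (fun j => Qd N hN P i j)]
    rw [if_pos hi]
    congr 1
    split_ifs with h1
    · rw [Finset.sum_ite_eq' (range N) (i-1) (fun j => Qd N hN P i j),
        if_pos (by simp at hi ⊢; omega)]
    · simp
  rw [Finset.sum_congr rfl hInner, Finset.sum_add_distrib]
  rw [show 2*N-1 = 2*(N-1)+1 by omega, split_odd_aux, show N-1+1 = N by omega]
  congr 1
  · refine Finset.sum_congr rfl fun j hj => ?_
    unfold ee
    rw [if_pos (by omega), show 2*j/2 = j by omega]
  · obtain ⟨M, rfl⟩ : ∃ M, N = M + 1 := ⟨N - 1, by omega⟩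
    rw [Finset.sum_range_succ' (fun i => if 1 ≤ i then Qd (M+1) hN P i (i-1) else 0) M,
      show M + 1 - 1 = M from rfl]
    simp only [Nat.add_sub_cancel]
    rw [if_neg (by omega), add_zero]
    refine Finset.sum_congr rfl fun j hj => ?_
    rw [if_pos (by omega)]
    unfold ee
    rw [if_neg (by omega), show (2*j+1)/2 = j by omega]

/-- For a bipartite non-signaling conditional distribution with binary outcomes,
the marginal output distribution of each party is within statistical distance `I_N / 2` of
the uniform distribution on `{0,1}`. -/
theorem marginal_close_to_uniform_of_nonsignaling (N : ℕ) (hN : 0 < N)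
    (P : Fin N → Fin N → Fin 2 → Fin 2 → ℝ)
    (hprob : ∀ a b, IsProbDist (fun xy : Fin 2 × Fin 2 => P a b xy.1 xy.2))
    (hnsX : ∀ a b b' x, ∑ y, P a b x y = ∑ y, P a b' x y)
    (hnsY : ∀ a a' b y, ∑ x, P a b x y = ∑ x, P a' b x y) :
    (∀ a b, statDist (fun x => ∑ y, P a b x y) (fun _ => 1 / 2) ≤ chainedBell N hN P / 2) ∧
    (∀ a b, statDist (fun y => ∑ x, P a b x y) (fun _ => 1 / 2) ≤ chainedBell N hN P / 2) := by
  have hpos : ∀ a b x y, 0 ≤ P a b x y := fun a b x y => (hprob a b).1 (x, y)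
  have htot : ∀ a b, ∑ x : Fin 2, ∑ y : Fin 2, P a b x y = 1 := by
    intro a b
    have h := (hprob a b).2
    rwa [Fintype.sum_prod_type] at h
  have hNm : N - 1 < N := by omega
  have hcb : chainedBell N hN P = (∑ k ∈ range (2*N-1), ee N hN P k)
      + ∑ x : Fin 2, P ⟨0, hN⟩ ⟨N-1, hNm⟩ x x := by
    unfold chainedBell
    rw [chain_sum_aux N hN P]
  have hedge := edge_aux N hN P hpos hnsX hnsY
  have hend := endpoint_aux N hN P hpos htot hnsX hNm
  have huX : ∀ m : ℕ, uu N hN P (2*m) = mX N hN P m := by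
    intro m; unfold uu; rw [if_pos (by omega), show 2*m/2 = m by omega]
  have huY : ∀ m : ℕ, uu N hN P (2*m+1) = mY N hN P m := by
    intro m; unfold uu; rw [if_neg (by omega), show (2*m+1)/2 = m by omega]
  have hkey : ∀ n : ℕ, n ≤ 2*N-1 →
      |uu N hN P n - uu N hN P 0| + |uu N hN P (2*N-1) - uu N hN P n|
        ≤ ∑ k ∈ range (2*N-1), ee N hN P k := by
    intro n hn
    have h1 := tele_aux (uu N hN P) (ee N hN P) 0 n (by omega)
      (fun k hk hk' => hedge k (by omega))
    have h2 := tele_aux (uu N hN P) (ee N hN P) n (2*N-1) hn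
      (fun k hk hk' => hedge k (by omega))
    have h3 : ∑ k ∈ Finset.Ico 0 n, ee N hN P k + ∑ k ∈ Finset.Ico n (2*N-1), ee N hN P k
        = ∑ k ∈ range (2*N-1), ee N hN P k := by
      rw [Finset.range_eq_Ico]
      exact Finset.sum_Ico_consecutive _ (by omega) hn
    linarith
  have hu0 : uu N hN P 0 = mX N hN P 0 := huX 0
  have hul : uu N hN P (2*N-1) = mY N hN P (N-1) := by
    have h := huY (N-1); rwa [show 2*(N-1)+1 = 2*N-1 by omega] at h
  have hmainX : ∀ m : ℕ, m < N → |2 * mX N hN P m - 1| ≤ chainedBell N hN P := by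
    intro m hm
    have h1 := hkey (2*m) (by omega)
    rw [huX m, hu0, hul] at h1
    rw [hcb]
    have e1 : 2 * mX N hN P m - 1 = (mX N hN P m - mX N hN P 0)
        + -(mY N hN P (N-1) - mX N hN P m) + (mX N hN P 0 + mY N hN P (N-1) - 1) := by ring
    have h4 := abs_add_le ((mX N hN P m - mX N hN P 0) + -(mY N hN P (N-1) - mX N hN P m))
      (mX N hN P 0 + mY N hN P (N-1) - 1)
    have h5 := abs_add_le (mX N hN P m - mX N hN P 0) (-(mY N hN P (N-1) - mX N hN P m))
    rw [abs_neg] at h5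
    rw [e1]
    linarith
  have hmainY : ∀ m : ℕ, m < N → |2 * mY N hN P m - 1| ≤ chainedBell N hN P := by
    intro m hm
    have h1 := hkey (2*m+1) (by omega)
    rw [huY m, hu0, hul] at h1
    rw [hcb]
    have e1 : 2 * mY N hN P m - 1 = (mY N hN P m - mX N hN P 0)
        + -(mY N hN P (N-1) - mY N hN P m) + (mX N hN P 0 + mY N hN P (N-1) - 1) := by ring
    have h4 := abs_add_le ((mY N hN P m - mX N hN P 0) + -(mY N hN P (N-1) - mY N hN P m))
      (mX N hN P 0 + mY N hN P (N-1) - 1)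
    have h5 := abs_add_le (mY N hN P m - mX N hN P 0) (-(mY N hN P (N-1) - mY N hN P m))
    rw [abs_neg] at h5
    rw [e1]
    linarith
  constructor
  · intro a b
    have hm : (∑ y, P a b 0 y) + (∑ y, P a b 1 y) = 1 := by
      have h := htot a b; rw [Fin.sum_univ_two] at h; exact h
    have hma : (∑ y, P a b 0 y) = mX N hN P a.val := by
      unfold mX
      have h : (⟨a.val % N, Nat.mod_lt _ hN⟩ : Fin N) = a := by
        ext; simp [Nat.mod_eq_of_lt a.isLt]
      rw [h]
      exact hnsX a b ⟨0, hN⟩ 0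
    calc statDist (fun x => ∑ y, P a b x y) (fun _ => 1 / 2)
        = |2 * (∑ y, P a b 0 y) - 1| / 2 := statDist_two_aux _ hm
      _ ≤ chainedBell N hN P / 2 := by
          rw [hma]
          have h := hmainX a.val a.isLt
          linarith
  · intro a b
    have hm : (∑ x, P a b x 0) + (∑ x, P a b x 1) = 1 := by
      have h := htot a b
      rw [Finset.sum_comm, Fin.sum_univ_two] at h
      exact h
    have hma : (∑ x, P a b x 0) = mY N hN P b.val := by
      unfold mY
      have h : (⟨b.val % N, Nat.mod_lt _ hN⟩ : Fin N) = b := by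
        ext; simp [Nat.mod_eq_of_lt b.isLt]
      rw [h]
      exact hnsY a ⟨0, hN⟩ b 0
    calc statDist (fun y => ∑ x, P a b x y) (fun _ => 1 / 2)
        = |2 * (∑ x, P a b x 0) - 1| / 2 := statDist_two_aux _ hm
      _ ≤ chainedBell N hN P / 2 := by
          rw [hma]
          have h := hmainY b.val b.isLt
          linarith

end
end

section
/- Let N ≥ 1, let X, Y ∈ {0,1} be binary outcomes, A ∈ {0,2,...,2N−2}, B ∈ {1,3,...,2N−1} inputs, and let Z and C range over arbitrary finite sets. Suppose P_{XYZ|ABC} is a tripartite non-signaling conditional probability distribution and C is distributed according to a distribution P_C chosen independently of the inputs A and B (so that the joint distribution is P_{XYZC|A=a,B=b}(x,y,z,c) = P_{XYZ|A=a,B=b,C=c}(x,y,z)·P_C(c)). Then for all a and b: D(P_{XZC|A=a}, U_X × P_{ZC}) ≤ I_N/2 and D(P_{YZC|B=b}, U_Y × P_{ZC}) ≤ I_N/2, where I_N is the chained Bell quantity of the bipartite marginal P_{XY|AB}, U_X and U_Y denote the uniform distribution on {0,1}, and P_{ZC} is the joint marginal distribution of Z and C (which by non-signaling is independent of a and b).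 -/
open Finset

noncomputable section

/-! ### Auxiliary definitions and lemmas -/

/-- The element of `Fin N` with value `k % N`. -/
def idx (N : ℕ) (hN : 0 < N) (k : ℕ) : Fin N := ⟨k % N, Nat.mod_lt k hN⟩

lemma idx_eq (N : ℕ) (hN : 0 < N) (k : ℕ) (hk : k < N) : idx N hN k = ⟨k, hk⟩ := by
  simp [idx, Nat.mod_eq_of_lt hk]

lemma idx_self' (N : ℕ) (hN : 0 < N) (a : Fin N) : idx N hN (a : ℕ) = a := by
  simp [idx, Nat.mod_eq_of_lt a.isLt]

/-- The sum of the correlation terms of all edges of the chain, for fixed `c` and `z`. -/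
def edgeSum (N : ℕ) (hN : 0 < N) {Z C : Type*} [Fintype Z]
    (P : Fin N → Fin N → C → Fin 2 → Fin 2 → Z → ℝ) (c : C) (z : Z) : ℝ :=
  (∑ k ∈ Finset.range N, ∑ x : Fin 2, P (idx N hN k) (idx N hN k) c x (1 - x) z)
    + (∑ k ∈ Finset.range (N - 1), ∑ x : Fin 2, P (idx N hN (k + 1)) (idx N hN k) c x (1 - x) z)
    + ∑ x : Fin 2, P (idx N hN 0) (idx N hN (N - 1)) c x x z

/-- The telescoping chain argument. -/
lemma chain_bound (N : ℕ) (hN : 0 < N) (f g : ℕ → Fin 2 → ℝ) (e e' : ℕ → ℝ) (G : ℝ)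
    (h1 : ∀ k, k < N → ∀ x, |f k x - g k x| ≤ e k)
    (h2 : ∀ k, k + 1 < N → ∀ x, |g k x - f (k + 1) x| ≤ e' k)
    (h3 : |f 0 1 - g (N - 1) 0| ≤ G) :
    ∀ j, j < N → |f j 0 - f j 1| ≤
      (∑ k ∈ Finset.range N, e k) + (∑ k ∈ Finset.range (N - 1), e' k) + G := by
  have A : ∀ d j, j + d + 1 = N →
      |f j 0 - g (N - 1) 0| ≤ (∑ k ∈ Finset.Ico j N, e k) + (∑ k ∈ Finset.Ico j (N - 1), e' k) := by
    intro d
    induction d with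
    | zero =>
      intro j hj
      have hjN : N - 1 = j := by omega
      have h' := h1 j (by omega) 0
      rw [hjN, show N = j + 1 by omega]
      simp only [Nat.add_sub_cancel, Finset.Ico_add_one_right_eq_Icc, Finset.Icc_self, Finset.Ico_self,
        Finset.sum_singleton, Finset.sum_empty, add_zero]
      exact h'
    | succ d ih =>
      intro j hj
      have hj1 : j + 1 < N := by omega
      have step := ih (j + 1) (by omega)
      have t1 : |f j 0 - g (N - 1) 0| ≤
          |f j 0 - g j 0| + |g j 0 - f (j + 1) 0| + |f (j + 1) 0 - g (N - 1) 0| := by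
        have a1 := abs_sub_le (f j 0) (f (j + 1) 0) (g (N - 1) 0)
        have a2 := abs_sub_le (f j 0) (g j 0) (f (j + 1) 0)
        linarith
      have s1 : (∑ k ∈ Finset.Ico j N, e k) = e j + ∑ k ∈ Finset.Ico (j + 1) N, e k :=
        Finset.sum_eq_sum_Ico_succ_bot (by omega) e
      have s2 : (∑ k ∈ Finset.Ico j (N - 1), e' k)
          = e' j + ∑ k ∈ Finset.Ico (j + 1) (N - 1), e' k :=
        Finset.sum_eq_sum_Ico_succ_bot (by omega) e'
      rw [s1, s2]
      have b1 := h1 j (by omega) 0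
      have b2 := h2 j hj1 0
      linarith
  have B : ∀ j, j < N → |f 0 1 - f j 1| ≤ ∑ k ∈ Finset.range j, (e k + e' k) := by
    intro j
    induction j with
    | zero => intro _; simp
    | succ j ih =>
      intro hj
      have c1 := h1 j (by omega) 1
      have c2 := h2 j hj 1
      have ihj := ih (by omega)
      have t1 : |f 0 1 - f (j + 1) 1| ≤
          |f 0 1 - f j 1| + |f j 1 - g j 1| + |g j 1 - f (j + 1) 1| := by
        have a1 := abs_sub_le (f 0 1) (f j 1) (f (j + 1) 1)
        have a2 := abs_sub_le (f j 1) (g j 1) (f (j + 1) 1)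
        linarith
      rw [Finset.sum_range_succ]
      linarith
  intro j hj
  have hA := A (N - 1 - j) j (by omega)
  have hB := B j hj
  have tri : |f j 0 - f j 1| ≤ |f j 0 - g (N - 1) 0| + G + |f 0 1 - f j 1| := by
    have a1 := abs_sub_le (f j 0) (g (N - 1) 0) (f j 1)
    have a2 := abs_sub_le (g (N - 1) 0) (f 0 1) (f j 1)
    have a3 := abs_sub_comm (g (N - 1) 0) (f 0 1)
    have a4 := abs_sub_comm (f 0 1) (f j 1)
    linarith
  have s1 : (∑ k ∈ Finset.range j, e k) + (∑ k ∈ Finset.Ico j N, e k)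
      = ∑ k ∈ Finset.range N, e k := by
    simp only [Finset.range_eq_Ico]
    exact Finset.sum_Ico_consecutive _ (by omega) (by omega)
  have s2 : (∑ k ∈ Finset.range j, e' k) + (∑ k ∈ Finset.Ico j (N - 1), e' k)
      = ∑ k ∈ Finset.range (N - 1), e' k := by
    simp only [Finset.range_eq_Ico]
    exact Finset.sum_Ico_consecutive _ (by omega) (by omega)
  rw [Finset.sum_add_distrib] at hB
  linarith

lemma helperA (u : Fin 2 → Fin 2 → ℝ) (hu : ∀ x y, 0 ≤ u x y) (x : Fin 2) :
    |(∑ y, u x y) - ∑ x', u x' x| ≤ ∑ x' : Fin 2, u x' (1 - x') := by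
  fin_cases x <;>
  · simp only [Fin.sum_univ_two, Fin.isValue, Fin.mk_zero, Fin.mk_one,
      show ((1 : Fin 2) - 0) = 1 by decide, show ((1 : Fin 2) - 1) = 0 by decide]
    rw [abs_le]
    constructor <;> nlinarith [hu 0 0, hu 0 1, hu 1 0, hu 1 1]

lemma helperB1 (u : Fin 2 → Fin 2 → ℝ) (hu : ∀ x y, 0 ≤ u x y) (x : Fin 2) :
    |(∑ y, u x y) - ∑ x', u x' (1 - x)| ≤ ∑ x' : Fin 2, u x' x' := by
  fin_cases x <;>
  · simp only [Fin.sum_univ_two, Fin.isValue, Fin.mk_zero, Fin.mk_one,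
      show ((1 : Fin 2) - 0) = 1 by decide, show ((1 : Fin 2) - 1) = 0 by decide]
    rw [abs_le]
    constructor <;> nlinarith [hu 0 0, hu 0 1, hu 1 0, hu 1 1]

lemma helperB2 (u : Fin 2 → Fin 2 → ℝ) (hu : ∀ x y, 0 ≤ u x y) (x : Fin 2) :
    |(∑ x', u x' x) - ∑ y, u (1 - x) y| ≤ ∑ x' : Fin 2, u x' x' := by
  fin_cases x <;>
  · simp only [Fin.sum_univ_two, Fin.isValue, Fin.mk_zero, Fin.mk_one,
      show ((1 : Fin 2) - 0) = 1 by decide, show ((1 : Fin 2) - 1) = 0 by decide]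
    rw [abs_le]
    constructor <;> nlinarith [hu 0 0, hu 0 1, hu 1 0, hu 1 1]

lemma edge_bounds (N : ℕ) (hN : 0 < N) {Z C : Type*} [Fintype Z]
    (P : Fin N → Fin N → C → Fin 2 → Fin 2 → Z → ℝ) (c : C)
    (hpos : ∀ a b x y z, 0 ≤ P a b c x y z)
    (hnsXZ : ∀ (a b b' : Fin N) x z, ∑ y, P a b c x y z = ∑ y, P a b' c x y z)
    (hnsYZ : ∀ (a a' b : Fin N) y z, ∑ x, P a b c x y z = ∑ x, P a' b c x y z)
    (z : Z) (a b : Fin N) :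
    |(∑ y, P a b c 0 y z) - ∑ y, P a b c 1 y z| ≤ edgeSum N hN P c z ∧
    |(∑ x, P a b c x 0 z) - ∑ x, P a b c x 1 z| ≤ edgeSum N hN P c z := by
  set f : ℕ → Fin 2 → ℝ := fun k x => ∑ y, P (idx N hN k) (idx N hN k) c x y z with hf
  set g : ℕ → Fin 2 → ℝ := fun k y => ∑ x, P (idx N hN k) (idx N hN k) c x y z with hg
  set e : ℕ → ℝ := fun k => ∑ x : Fin 2, P (idx N hN k) (idx N hN k) c x (1 - x) z with he_def
  set e' : ℕ → ℝ := fun k => ∑ x : Fin 2, P (idx N hN (k + 1)) (idx N hN k) c x (1 - x) z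
    with he'_def
  set G : ℝ := ∑ x : Fin 2, P (idx N hN 0) (idx N hN (N - 1)) c x x z with hG
  have hpos' : ∀ (a b : Fin N) x y, 0 ≤ P a b c x y z := fun a b x y => hpos a b x y z
  have h1 : ∀ k, ∀ x : Fin 2, |f k x - g k x| ≤ e k := by
    intro k x
    exact helperA (fun x y => P (idx N hN k) (idx N hN k) c x y z)
      (fun x y => hpos' _ _ _ _) x
  have h2 : ∀ k, k + 1 < N → ∀ x : Fin 2, |g k x - f (k + 1) x| ≤ e' k := by
    intro k hk x
    have hgk : g k x = ∑ x', P (idx N hN (k + 1)) (idx N hN k) c x' x z :=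
      hnsYZ (idx N hN k) (idx N hN (k + 1)) (idx N hN k) x z
    have hfk : f (k + 1) x = ∑ y, P (idx N hN (k + 1)) (idx N hN k) c x y z :=
      hnsXZ (idx N hN (k + 1)) (idx N hN (k + 1)) (idx N hN k) x z
    rw [hgk, hfk, abs_sub_comm]
    exact helperA (fun x y => P (idx N hN (k + 1)) (idx N hN k) c x y z)
      (fun x y => hpos' _ _ _ _) x
  have hg1 : ∀ y, g (N - 1) y = ∑ x, P (idx N hN 0) (idx N hN (N - 1)) c x y z :=
    fun y => hnsYZ (idx N hN (N - 1)) (idx N hN 0) (idx N hN (N - 1)) y z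
  have hf1 : ∀ x, f 0 x = ∑ y, P (idx N hN 0) (idx N hN (N - 1)) c x y z :=
    fun x => hnsXZ (idx N hN 0) (idx N hN 0) (idx N hN (N - 1)) x z
  have h3 : |f 0 1 - g (N - 1) 0| ≤ G := by
    rw [hf1, hg1, show (0 : Fin 2) = 1 - 1 by decide]
    exact helperB1 (fun x y => P (idx N hN 0) (idx N hN (N - 1)) c x y z)
      (fun x y => hpos' _ _ _ _) 1
  have h3b : |g (N - 1) 1 - f 0 0| ≤ G := by
    rw [hf1, hg1, show (0 : Fin 2) = 1 - 1 by decide]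
    exact helperB2 (fun x y => P (idx N hN 0) (idx N hN (N - 1)) c x y z)
      (fun x y => hpos' _ _ _ _) 1
  constructor
  · -- X bound
    have key := chain_bound N hN f g e e' G (fun k _ x => h1 k x) h2 h3 (a : ℕ) a.isLt
    have hfa : ∀ x : Fin 2, f (a : ℕ) x = ∑ y, P a b c x y z := by
      intro x
      show (∑ y, P (idx N hN (a : ℕ)) (idx N hN (a : ℕ)) c x y z) = _
      rw [idx_self' N hN a]
      exact hnsXZ a a b x z
    rw [← hfa 0, ← hfa 1]
    exact key
  · -- Y bound, via the reflected chain
    have h1' : ∀ k, k < N → ∀ x : Fin 2,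
        |g (N - 1 - k) x - f (N - 1 - k) x| ≤ e (N - 1 - k) := by
      intro k _ x
      rw [abs_sub_comm]
      exact h1 _ x
    have h2' : ∀ k, k + 1 < N → ∀ x : Fin 2,
        |f (N - 1 - k) x - g (N - 1 - (k + 1)) x| ≤ e' (N - 1 - 1 - k) := by
      intro k hk x
      have hmm : N - 1 - 1 - k = N - 1 - (k + 1) := by omega
      have hm1 : N - 1 - k = N - 1 - (k + 1) + 1 := by omega
      rw [hmm, hm1, abs_sub_comm]
      exact h2 _ (by omega) x
    have h3' : |g (N - 1 - 0) 1 - f (N - 1 - (N - 1)) 0| ≤ G := by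
      rw [Nat.sub_zero, Nat.sub_self]
      exact h3b
    have key := chain_bound N hN (fun k x => g (N - 1 - k) x) (fun k x => f (N - 1 - k) x)
      (fun k => e (N - 1 - k)) (fun k => e' (N - 1 - 1 - k)) G h1' h2' h3'
      (N - 1 - (b : ℕ)) (by omega)
    rw [Finset.sum_range_reflect e N, Finset.sum_range_reflect e' (N - 1)] at key
    have hbb : N - 1 - (N - 1 - (b : ℕ)) = (b : ℕ) := by omega
    rw [hbb] at key
    have hgb : ∀ y : Fin 2, g (b : ℕ) y = ∑ x, P a b c x y z := by
      intro y
      show (∑ x, P (idx N hN (b : ℕ)) (idx N hN (b : ℕ)) c x y z) = _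
      rw [idx_self' N hN b]
      exact hnsYZ b a b y z
    rw [← hgb 0, ← hgb 1]
    exact key

lemma statDist_half {Z C : Type*} [Fintype Z] [Fintype C] (PC : C → ℝ)
    (hPC0 : ∀ c, 0 ≤ PC c) (m : Fin 2 → Z → C → ℝ) (S : Z → C → ℝ)
    (hS : ∀ z c, S z c = m 0 z c + m 1 z c) :
    statDist (fun p : Fin 2 × Z × C => PC p.2.2 * m p.1 p.2.1 p.2.2)
        (fun p : Fin 2 × Z × C => (PC p.2.2 * S p.2.1 p.2.2) / 2)
      = (1 / 2) * ∑ c, ∑ z, PC c * |m 0 z c - m 1 z c| := by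
  rw [statDist]
  congr 1
  rw [Fintype.sum_prod_type, Fin.sum_univ_two, ← Finset.sum_add_distrib,
    Fintype.sum_prod_type, Finset.sum_comm]
  refine Finset.sum_congr rfl fun c _ => Finset.sum_congr rfl fun z _ => ?_
  simp only []
  rw [hS]
  have h0 : PC c * m 0 z c - PC c * (m 0 z c + m 1 z c) / 2 = PC c * (m 0 z c - m 1 z c) / 2 := by
    ring
  have h1 : PC c * m 1 z c - PC c * (m 0 z c + m 1 z c) / 2 = PC c * (m 1 z c - m 0 z c) / 2 := by
    ring
  rw [h0, h1]
  rw [abs_div, abs_div, abs_mul, abs_mul, abs_of_nonneg (hPC0 c),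
    abs_sub_comm (m 1 z c), show |(2 : ℝ)| = 2 by norm_num]
  ring

lemma sum_pairs (N : ℕ) (hN : 0 < N) (S : Fin N → Fin N → ℝ) :
    (∑ a : Fin N, ∑ b : Fin N,
        if (a : ℕ) = (b : ℕ) ∨ (a : ℕ) = (b : ℕ) + 1 then S a b else 0)
      = (∑ k ∈ Finset.range N, S (idx N hN k) (idx N hN k))
        + ∑ k ∈ Finset.range (N - 1), S (idx N hN (k + 1)) (idx N hN k) := by
  rw [Finset.sum_comm]
  have hsplit : ∀ b : Fin N,
      (∑ a : Fin N, if (a : ℕ) = (b : ℕ) ∨ (a : ℕ) = (b : ℕ) + 1 then S a b else 0)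
        = S b b + (if (b : ℕ) + 1 < N then S (idx N hN ((b : ℕ) + 1)) b else 0) := by
    intro b
    have hsp : ∀ a : Fin N,
        (if (a : ℕ) = (b : ℕ) ∨ (a : ℕ) = (b : ℕ) + 1 then S a b else 0)
          = (if (a : ℕ) = (b : ℕ) then S a b else 0)
            + (if (a : ℕ) = (b : ℕ) + 1 then S a b else 0) := by
      intro a
      by_cases h1 : (a : ℕ) = (b : ℕ) <;> by_cases h2 : (a : ℕ) = (b : ℕ) + 1 <;>
        simp [h1, h2] <;> omega
    rw [Finset.sum_congr rfl fun a _ => hsp a, Finset.sum_add_distrib]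
    congr 1
    · rw [Finset.sum_eq_single b]
      · simp
      · intro a _ hab
        rw [if_neg fun h => hab (Fin.ext h)]
      · intro h; exact absurd (Finset.mem_univ b) h
    · by_cases hb : (b : ℕ) + 1 < N
      · rw [if_pos hb, Finset.sum_eq_single (idx N hN ((b : ℕ) + 1))]
        · rw [if_pos]
          rw [idx_eq N hN _ hb]
        · intro a _ ha
          rw [if_neg]
          intro h
          exact ha (by rw [idx_eq N hN _ hb]; exact Fin.ext h)
        · intro h; exact absurd (Finset.mem_univ _) h
      · rw [if_neg hb, Finset.sum_eq_zero]
        intro a _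
        rw [if_neg]
        intro h
        exact hb (h ▸ a.isLt)
  rw [Finset.sum_congr rfl fun b _ => hsplit b, Finset.sum_add_distrib]
  congr 1
  · rw [← Fin.sum_univ_eq_sum_range (fun k => S (idx N hN k) (idx N hN k)) N]
    exact Finset.sum_congr rfl fun b _ => by rw [idx_self']
  · trans (∑ k ∈ Finset.range N, if k + 1 < N then S (idx N hN (k + 1)) (idx N hN k) else 0)
    · rw [← Fin.sum_univ_eq_sum_range
        (fun k => if k + 1 < N then S (idx N hN (k + 1)) (idx N hN k) else 0) N]
      exact Finset.sum_congr rfl fun b _ => by rw [idx_self']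
    · rw [← Finset.sum_subset (Finset.range_subset_range.mpr (show N - 1 ≤ N by omega))
        (fun k hk hk' => ?_)]
      · exact Finset.sum_congr rfl fun k hk => if_pos (by simp at hk; omega)
      · rw [if_neg]
        simp at hk hk'
        omega

lemma swap4 {ι Z C : Type*} [Fintype Z] [Fintype C] (s : Finset ι) (PC : C → ℝ)
    (F : ι → Fin 2 → C → Z → ℝ) :
    (∑ i ∈ s, ∑ x : Fin 2, ∑ c, PC c * ∑ z, F i x c z)
      = ∑ c, PC c * ∑ z, ∑ i ∈ s, ∑ x : Fin 2, F i x c z := by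
  calc (∑ i ∈ s, ∑ x : Fin 2, ∑ c, PC c * ∑ z, F i x c z)
      = ∑ i ∈ s, ∑ c, ∑ x : Fin 2, PC c * ∑ z, F i x c z :=
        Finset.sum_congr rfl fun i _ => Finset.sum_comm
    _ = ∑ c, ∑ i ∈ s, ∑ x : Fin 2, PC c * ∑ z, F i x c z := Finset.sum_comm
    _ = ∑ c, PC c * ∑ z, ∑ i ∈ s, ∑ x : Fin 2, F i x c z := by
        refine Finset.sum_congr rfl fun c _ => ?_
        simp only [Finset.mul_sum]
        calc (∑ i ∈ s, ∑ x : Fin 2, ∑ z, PC c * F i x c z)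
            = ∑ i ∈ s, ∑ z, ∑ x : Fin 2, PC c * F i x c z :=
              Finset.sum_congr rfl fun i _ => Finset.sum_comm
          _ = ∑ z, ∑ i ∈ s, ∑ x : Fin 2, PC c * F i x c z := Finset.sum_comm

lemma swap1 {Z C : Type*} [Fintype Z] [Fintype C] (PC : C → ℝ) (F : Fin 2 → C → Z → ℝ) :
    (∑ x : Fin 2, ∑ c, PC c * ∑ z, F x c z) = ∑ c, PC c * ∑ z, ∑ x : Fin 2, F x c z := by
  calc (∑ x : Fin 2, ∑ c, PC c * ∑ z, F x c z)
      = ∑ c, ∑ x : Fin 2, PC c * ∑ z, F x c z := Finset.sum_comm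
    _ = ∑ c, PC c * ∑ z, ∑ x : Fin 2, F x c z := by
        refine Finset.sum_congr rfl fun c _ => ?_
        simp only [Finset.mul_sum]
        exact Finset.sum_comm

lemma chainedBell_eq (N : ℕ) (hN : 0 < N) {Z C : Type*} [Fintype Z] [Fintype C]
    (P : Fin N → Fin N → C → Fin 2 → Fin 2 → Z → ℝ) (PC : C → ℝ) :
    chainedBell N hN (fun a b x y => ∑ c, PC c * ∑ z, P a b c x y z)
      = ∑ c, PC c * ∑ z, edgeSum N hN P c z := by
  unfold chainedBell edgeSum
  rw [sum_pairs N hN]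
  have expand : (∑ c, PC c * ∑ z,
      ((∑ k ∈ Finset.range N, ∑ x : Fin 2, P (idx N hN k) (idx N hN k) c x (1 - x) z)
        + (∑ k ∈ Finset.range (N - 1), ∑ x : Fin 2,
            P (idx N hN (k + 1)) (idx N hN k) c x (1 - x) z)
        + ∑ x : Fin 2, P (idx N hN 0) (idx N hN (N - 1)) c x x z))
      = (∑ c, PC c * ∑ z, ∑ k ∈ Finset.range N, ∑ x : Fin 2,
            P (idx N hN k) (idx N hN k) c x (1 - x) z)
        + (∑ c, PC c * ∑ z, ∑ k ∈ Finset.range (N - 1), ∑ x : Fin 2,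
            P (idx N hN (k + 1)) (idx N hN k) c x (1 - x) z)
        + ∑ c, PC c * ∑ z, ∑ x : Fin 2, P (idx N hN 0) (idx N hN (N - 1)) c x x z := by
    rw [← Finset.sum_add_distrib, ← Finset.sum_add_distrib]
    refine Finset.sum_congr rfl fun c _ => ?_
    rw [Finset.sum_add_distrib, Finset.sum_add_distrib]
    ring
  rw [expand]
  rw [← swap4 (Finset.range N) PC (fun k x c z => P (idx N hN k) (idx N hN k) c x (1 - x) z),
    ← swap4 (Finset.range (N - 1)) PC
      (fun k x c z => P (idx N hN (k + 1)) (idx N hN k) c x (1 - x) z),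
    ← swap1 PC (fun x c z => P (idx N hN 0) (idx N hN (N - 1)) c x x z)]
  congr 2
  rw [idx_eq N hN 0 hN, idx_eq N hN (N - 1) (by omega)]

/-- Theorem 1 of the paper: Let `P (a, b, c) (x, y, z)` be a tripartite
non-signaling conditional distribution, where the first two parties have binary outcomes
`x y : Fin 2` and chained-Bell inputs `a b : Fin N`, while the third party has input `c : C`
and output `z : Z`.  If the third party's input `C` is chosen independently of `A` and `B`
according to `PC`, then the joint distribution of `(X, Z, C)` given `A = a` is within
statistical distance `I_N / 2` of `U_X × P_{ZC}`, and symmetrically for `(Y, Z, C)` given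
`B = b`.  Here `I_N` is the chained Bell quantity of the bipartite marginal
`P_{XY|AB}(x,y) = ∑_c PC(c) ∑_z P (a,b,c) (x,y,z)`, and `U_X × P_{ZC}` assigns probability
`P_{ZC}(z,c)/2` to each `(x,z,c)`. -/
theorem tripartite_marginal_close_to_uniform (N : ℕ) (hN : 0 < N)
    {Z C : Type*} [Fintype Z] [Fintype C]
    (P : Fin N → Fin N → C → Fin 2 → Fin 2 → Z → ℝ) (PC : C → ℝ)
    (hPC : IsProbDist PC)
    (hprob : ∀ a b c, IsProbDist (fun q : (Fin 2 × Fin 2) × Z => P a b c q.1.1 q.1.2 q.2))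
    -- non-signaling: the marginal of any subset of parties depends only on that subset's inputs
    (hnsX : ∀ a b b' c c' x, ∑ y, ∑ z, P a b c x y z = ∑ y, ∑ z, P a b' c' x y z)
    (hnsY : ∀ a a' b c c' y, ∑ x, ∑ z, P a b c x y z = ∑ x, ∑ z, P a' b c' x y z)
    (hnsZ : ∀ a a' b b' c z, ∑ x, ∑ y, P a b c x y z = ∑ x, ∑ y, P a' b' c x y z)
    (hnsXY : ∀ a b c c' x y, ∑ z, P a b c x y z = ∑ z, P a b c' x y z)
    (hnsXZ : ∀ a b b' c x z, ∑ y, P a b c x y z = ∑ y, P a b' c x y z)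
    (hnsYZ : ∀ a a' b c y z, ∑ x, P a b c x y z = ∑ x, P a' b c x y z) :
    (∀ a b, statDist
        (fun p : Fin 2 × Z × C => PC p.2.2 * ∑ y, P a b p.2.2 p.1 y p.2.1)
        (fun p : Fin 2 × Z × C => (PC p.2.2 * ∑ x, ∑ y, P a b p.2.2 x y p.2.1) / 2)
      ≤ chainedBell N hN (fun a b x y => ∑ c, PC c * ∑ z, P a b c x y z) / 2) ∧
    (∀ a b, statDist
        (fun p : Fin 2 × Z × C => PC p.2.2 * ∑ x, P a b p.2.2 x p.1 p.2.1)
        (fun p : Fin 2 × Z × C => (PC p.2.2 * ∑ x, ∑ y, P a b p.2.2 x y p.2.1) / 2)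
      ≤ chainedBell N hN (fun a b x y => ∑ c, PC c * ∑ z, P a b c x y z) / 2) := by
  have hpos : ∀ a b c x y z, 0 ≤ P a b c x y z :=
    fun a b c x y z => (hprob a b c).1 ((x, y), z)
  have hbounds := fun (c : C) =>
    edge_bounds N hN P c (fun a b x y z => hpos a b c x y z)
      (fun a b b' x z => hnsXZ a b b' c x z) (fun a a' b y z => hnsYZ a a' b c y z)
  have hfinal : ∀ (m : Fin 2 → Z → C → ℝ),
      (∀ c z, |m 0 z c - m 1 z c| ≤ edgeSum N hN P c z) →
      (1 / 2) * (∑ c, ∑ z, PC c * |m 0 z c - m 1 z c|)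
        ≤ chainedBell N hN (fun a b x y => ∑ c, PC c * ∑ z, P a b c x y z) / 2 := by
    intro m hm
    rw [chainedBell_eq N hN P PC]
    have step : (∑ c, ∑ z, PC c * |m 0 z c - m 1 z c|)
        ≤ ∑ c, PC c * ∑ z, edgeSum N hN P c z := by
      refine Finset.sum_le_sum fun c _ => ?_
      rw [Finset.mul_sum]
      exact Finset.sum_le_sum fun z _ =>
        mul_le_mul_of_nonneg_left (hm c z) (hPC.1 c)
    linarith
  constructor
  · intro a b
    have hs : ∀ (z : Z) (c : C), (∑ x, ∑ y, P a b c x y z)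
        = (∑ y, P a b c 0 y z) + ∑ y, P a b c 1 y z := by
      intro z c; rw [Fin.sum_univ_two]
    have hd := statDist_half PC hPC.1 (fun x z c => ∑ y, P a b c x y z)
      (fun z c => ∑ x, ∑ y, P a b c x y z) hs
    rw [hd]
    exact hfinal (fun x z c => ∑ y, P a b c x y z) (fun c z => (hbounds c z a b).1)
  · intro a b
    have hs : ∀ (z : Z) (c : C), (∑ x, ∑ y, P a b c x y z)
        = (∑ x, P a b c x 0 z) + ∑ x, P a b c x 1 z := by
      intro z c; simp only [Fin.sum_univ_two]; ring
    have hd := statDist_half PC hPC.1 (fun y z c => ∑ x, P a b c x y z)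
      (fun z c => ∑ x, ∑ y, P a b c x y z) hs
    rw [hd]
    exact hfinal (fun y z c => ∑ x, P a b c x y z) (fun c z => (hbounds c z a b).2)

end
end

section
/- Let N ≥ 1 and consider a hidden variable model given by a joint conditional distribution P_{XYUV|AB} with binary outcomes X, Y ∈ {0,1}, inputs A ∈ {0,2,...,2N−2}, B ∈ {1,3,...,2N−1}, and hidden variables U, V in finite sets. Assume: (i) the hidden variables are independent of the inputs, i.e. the marginal P_{UV|A=a,B=b} equals a fixed distribution P_{UV} for all a, b; (ii) locality of the local parts, i.e. the marginal P_{X|A=a,B=b,U=u,V=v} depends only on a and u, and the marginal P_{Y|A=a,B=b,U=u,V=v} depends only on b and v. Then for all inputs a and b: D(P_{XU|A=a}, U_X × P_U) ≤ I_N/2 and D(P_{YV|B=b}, U_Y × P_V) ≤ I_N/2, where I_N is the chained Bell quantity of the bipartite marginal P_{XY|AB}, U_X and U_Y are uniform on {0,1}, and P_U, P_V are the marginals of P_{UV}. -/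
/-!
Conditioned on a hidden state `(u, v)`, locality and input independence make the model a
(unnormalised) no-signalling box. Walk along the chain `A = 0, B = 1, A = 2, …, B = 2N - 1`:
consecutive outcome-`0` marginals differ by at most the probability of anticorrelated outcomes
for that pair of inputs, and the closing link `(A = 0, B = 2N - 1)` compares Bob's marginal with
`w - p₀`, the mirror image of Alice's marginal `p₀` (where `w` is the weight of the state),
at the cost of the probability of correlated outcomes. So every marginal `p` is joined to its
mirror image `w - p` by a path of length at most the chained Bell value of the box, i.e.
`|2p - w|` is bounded by it. Summing over hidden states bounds the statistical distances.
-/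

open Finset

noncomputable section

section ReflectedChain

variable {α : Type*} [PseudoMetricSpace α] {σ : α → α} {F G : ℕ → α} {n : ℕ}

theorem dist_le_Ico_sum_zigzag {m m' : ℕ} (h : m ≤ m') :
    dist (F m) (F m') ≤ ∑ i ∈ Ico m m', (dist (F i) (G i) + dist (G i) (F (i + 1))) :=
  dist_le_Ico_sum_of_dist_le h fun _ _ => dist_triangle _ _ _

theorem dist_reflect_left_le_sum_zigzag (hσ : Isometry σ) (hF : F n = σ (F 0)) {k : ℕ}
    (hk : k ≤ n) :
    dist (F k) (σ (F k)) ≤ ∑ i ∈ range n, (dist (F i) (G i) + dist (G i) (F (i + 1))) :=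
  calc dist (F k) (σ (F k)) ≤ dist (F k) (F n) + dist (F n) (σ (F k)) := dist_triangle _ _ _
    _ = dist (F 0) (F k) + dist (F k) (F n) := by rw [hF, hσ.dist_eq, add_comm]
    _ ≤ _ := by
      rw [range_eq_Ico, ← sum_Ico_consecutive _ (Nat.zero_le k) hk]
      exact add_le_add (dist_le_Ico_sum_zigzag k.zero_le) (dist_le_Ico_sum_zigzag hk)

theorem dist_reflect_right_le_sum_zigzag (hσ : Isometry σ) (hF : F n = σ (F 0)) {k : ℕ}
    (hk : k < n) :
    dist (G k) (σ (G k)) ≤ ∑ i ∈ range n, (dist (F i) (G i) + dist (G i) (F (i + 1))) :=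
  calc dist (G k) (σ (G k))
      ≤ dist (G k) (F (k + 1)) + dist (F (k + 1)) (F n) + dist (F n) (σ (F k))
          + dist (σ (F k)) (σ (G k)) := dist_triangle4 _ _ _ _ |>.trans (by
            gcongr; exact dist_triangle _ _ _)
    _ = dist (F 0) (F k) + (dist (F k) (G k) + dist (G k) (F (k + 1)))
          + dist (F (k + 1)) (F n) := by rw [hF, hσ.dist_eq, hσ.dist_eq]; ring
    _ ≤ _ := by
      rw [range_eq_Ico, ← sum_Ico_consecutive _ (Nat.zero_le (k + 1)) hk,
        sum_Ico_succ_top k.zero_le]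
      gcongr
      exacts [dist_le_Ico_sum_zigzag k.zero_le, dist_le_Ico_sum_zigzag hk]

end ReflectedChain

section ChainedBell

variable {N : ℕ} (hN : 0 < N)

theorem chainedBell_sum {ι : Type*} (s : Finset ι) (Q : ι → Fin N → Fin N → Fin 2 → Fin 2 → ℝ) :
    chainedBell N hN (fun a b x y => ∑ i ∈ s, Q i a b x y) = ∑ i ∈ s, chainedBell N hN (Q i) := by
  simp only [chainedBell, sum_add_distrib]
  congr 1
  · rw [sum_comm (s := s)]
    refine sum_congr rfl fun a _ => ?_
    rw [sum_comm (s := s)]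
    refine sum_congr rfl fun b _ => ?_
    split_ifs
    · exact sum_comm
    · simp
  · exact sum_comm

theorem sum_ite_adjacent (T : Fin N → Fin N → ℝ) (b : Fin N) :
    ∑ a : Fin N, (if (a : ℕ) = (b : ℕ) ∨ (a : ℕ) = (b : ℕ) + 1 then T a b else 0) =
      T b b + if h : (b : ℕ) + 1 < N then T ⟨b + 1, h⟩ b else 0 := by
  split_ifs with h
  · rw [Fintype.sum_eq_add b ⟨b + 1, h⟩ (by simp [Fin.ext_iff]) fun a ha => by
      simp [Fin.ext_iff] at ha; simp; omega]
    simp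
  · rw [Fintype.sum_eq_single b fun a ha => by
      simp [Fin.ext_iff] at ha; simp; omega]
    simp

theorem chainedBell_eq_sum_chain (Q : Fin N → Fin N → Fin 2 → Fin 2 → ℝ) :
    chainedBell N hN Q = ∑ b : Fin N, (∑ x, Q b b x (1 - x) +
      if h : (b : ℕ) + 1 < N then ∑ x, Q ⟨b + 1, h⟩ b x (1 - x)
      else ∑ x, Q ⟨0, hN⟩ ⟨N - 1, by omega⟩ x x) := by
  have hlast : ∑ b : Fin N, (if (b : ℕ) + 1 < N then 0 else
      ∑ x, Q ⟨0, hN⟩ ⟨N - 1, by omega⟩ x x) = ∑ x, Q ⟨0, hN⟩ ⟨N - 1, by omega⟩ x x := by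
    rw [Fintype.sum_eq_single ⟨N - 1, by omega⟩ fun b hb => by
      simp [Fin.ext_iff] at hb; simp; omega]
    simp; omega
  rw [chainedBell, sum_comm, ← hlast, ← sum_add_distrib]
  refine sum_congr rfl fun b _ => ?_
  rw [sum_ite_adjacent (fun a b => ∑ x, Q a b x (1 - x))]
  split_ifs <;> ring

end ChainedBell

theorem abs_sum_zero_sub_sum_zero_le {q : Fin 2 → Fin 2 → ℝ} (hq : ∀ x y, 0 ≤ q x y) :
    |∑ y, q 0 y - ∑ x, q x 0| ≤ ∑ x, q x (1 - x) := by
  simp only [Fin.sum_univ_two]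
  have := hq 0 1; have := hq 1 0
  norm_num [abs_le]
  constructor <;> linarith

theorem abs_sum_zero_sub_sum_one_le {q : Fin 2 → Fin 2 → ℝ} (hq : ∀ x y, 0 ≤ q x y) :
    |∑ x, q x 0 - ∑ y, q 1 y| ≤ ∑ x, q x x := by
  simp only [Fin.sum_univ_two]
  have := hq 0 0; have := hq 1 1
  rw [abs_le]
  constructor <;> linarith

/-- Weights are not normalised, so a hidden variable model restricted to one hidden state
is again such a box. -/
structure IsNoSignalling {α β : Type*} (Q : α → β → Fin 2 → Fin 2 → ℝ) : Prop where
  nonneg : ∀ a b x y, 0 ≤ Q a b x y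
  left_marginal_eq : ∀ a b b' x, ∑ y, Q a b x y = ∑ y, Q a b' x y
  right_marginal_eq : ∀ a a' b y, ∑ x, Q a b x y = ∑ x, Q a' b x y

namespace IsNoSignalling

variable {α β : Type*} {Q : α → β → Fin 2 → Fin 2 → ℝ}

theorem total_eq (hQ : IsNoSignalling Q) (a a' : α) (b b' : β) :
    ∑ x, ∑ y, Q a b x y = ∑ x, ∑ y, Q a' b' x y := by
  simp_rw [hQ.left_marginal_eq a b b']
  rw [sum_comm, sum_comm (f := fun x y => Q a' b' x y)]
  simp_rw [hQ.right_marginal_eq a a' b']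

theorem left_marginal_one (hQ : IsNoSignalling Q) (a a' : α) (b b' : β) :
    ∑ y, Q a b 1 y = ∑ x, ∑ y, Q a' b' x y - ∑ y, Q a b 0 y := by
  rw [← hQ.total_eq a a' b b']
  simp only [Fin.sum_univ_two]
  ring

theorem right_marginal_one (hQ : IsNoSignalling Q) (a a' : α) (b b' : β) :
    ∑ x, Q a b x 1 = ∑ x, ∑ y, Q a' b' x y - ∑ x, Q a b x 0 := by
  rw [← hQ.total_eq a a' b b']
  simp only [Fin.sum_univ_two]
  ring

end IsNoSignalling

namespace IsNoSignalling

variable {N : ℕ} (hN : 0 < N) {Q : Fin N → Fin N → Fin 2 → Fin 2 → ℝ}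

theorem abs_bias_le_chainedBell (hQ : IsNoSignalling Q) (a b : Fin N) :
    |∑ y, Q a b 0 y - ∑ y, Q a b 1 y| ≤ chainedBell N hN Q ∧
      |∑ x, Q a b x 0 - ∑ x, Q a b x 1| ≤ chainedBell N hN Q := by
  set w := ∑ x, ∑ y, Q a b x y
  -- Alice's and Bob's outcome-`0` marginals along the chain, closed at the mirror image of `F 0`.
  let F : ℕ → ℝ := fun i =>
    if h : i < N then ∑ y, Q ⟨i, h⟩ b 0 y else w - ∑ y, Q ⟨0, hN⟩ b 0 y
  let G : ℕ → ℝ := fun j => if h : j < N then ∑ x, Q a ⟨j, h⟩ x 0 else 0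
  have hσ : Isometry (fun t : ℝ => w - t) := (IsometryEquiv.subLeft w).isometry
  have hFN : F N = w - F 0 := by simp [F, hN]
  have hF (i : Fin N) (b' : Fin N) : F i = ∑ y, Q i b' 0 y := by
    simp only [F, dif_pos i.isLt, Fin.eta]
    exact hQ.left_marginal_eq i b b' 0
  have hG (a' : Fin N) (j : Fin N) : G j = ∑ x, Q a' j x 0 := by
    simp only [G, dif_pos j.isLt, Fin.eta]
    exact hQ.right_marginal_eq a a' j 0
  have hchain : ∑ i ∈ range N, (dist (F i) (G i) + dist (G i) (F (i + 1)))
      ≤ chainedBell N hN Q := by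
    rw [chainedBell_eq_sum_chain hN,
      ← Fin.sum_univ_eq_sum_range (fun i => dist (F i) (G i) + dist (G i) (F (i + 1)))]
    refine sum_le_sum fun i _ => add_le_add ?_ ?_
    · rw [Real.dist_eq, hF i i, hG i i]
      exact abs_sum_zero_sub_sum_zero_le (hQ.nonneg i i)
    · split_ifs with h
      · have hF' : F (i + 1) = ∑ y, Q ⟨i + 1, h⟩ i 0 y := hF ⟨i + 1, h⟩ i
        rw [Real.dist_eq, abs_sub_comm, hF', hG ⟨i + 1, h⟩ i]
        exact abs_sum_zero_sub_sum_zero_le (hQ.nonneg _ i)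
      · have hlast : F N = ∑ y, Q ⟨0, hN⟩ ⟨N - 1, by omega⟩ 1 y := by
          rw [hFN, hQ.left_marginal_one _ a _ b, (hF ⟨0, hN⟩ ⟨N - 1, by omega⟩ : F 0 = _)]
        rw [show (i : ℕ) = N - 1 by omega, Nat.sub_add_cancel hN, Real.dist_eq, hlast,
          (hG ⟨0, hN⟩ ⟨N - 1, by omega⟩ : G (N - 1) = _)]
        exact abs_sum_zero_sub_sum_one_le (hQ.nonneg _ _)
  constructor
  · rw [hQ.left_marginal_one a a b b, ← hF a b, ← Real.dist_eq]
    exact (dist_reflect_left_le_sum_zigzag hσ hFN a.isLt.le).trans hchain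
  · rw [hQ.right_marginal_one a a b b, ← hG a b, ← Real.dist_eq]
    exact (dist_reflect_right_le_sum_zigzag hσ hFN b.isLt).trans hchain

end IsNoSignalling

theorem statDist_le_sum_abs_sub {U V : Type*} [Fintype U] [Fintype V]
    (R : Fin 2 → U → V → ℝ) (W : U → V → ℝ) (hW : ∀ u v, R 0 u v + R 1 u v = W u v) :
    statDist (fun p : Fin 2 × U => ∑ v, R p.1 p.2 v) (fun p => (∑ v, W p.2 v) / 2)
      ≤ (∑ u, ∑ v, |R 0 u v - R 1 u v|) / 2 := by
  rw [statDist, Fintype.sum_prod_type, Fin.sum_univ_two, ← sum_add_distrib, one_div_mul_eq_div]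
  gcongr with u
  have hsum : ∑ v, W u v = ∑ v, R 0 u v + ∑ v, R 1 u v := by
    simp_rw [← hW]
    exact sum_add_distrib
  calc _ = |∑ v, R 0 u v - ∑ v, R 1 u v| := by
        rw [hsum, show ∀ s t : ℝ, t - (s + t) / 2 = -((s - t) / 2) by intros; ring, abs_neg,
          show ∀ s t : ℝ, s - (s + t) / 2 = (s - t) / 2 by intros; ring, abs_div, abs_two]
        ring
    _ ≤ ∑ v, |R 0 u v - R 1 u v| := by
      rw [← sum_sub_distrib]
      exact abs_sum_le_sum_abs _ _

theorem isNoSignalling_of_local {α β U V : Type*}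
    (P : α → β → Fin 2 → Fin 2 → U → V → ℝ) (PUV : U → V → ℝ)
    (hP : ∀ a b x y u v, 0 ≤ P a b x y u v)
    (hiid : ∀ a b u v, ∑ x, ∑ y, P a b x y u v = PUV u v)
    (hlocX : ∀ a b b' u v v' x, 0 < PUV u v → 0 < PUV u v' →
      (∑ y, P a b x y u v) / PUV u v = (∑ y, P a b' x y u v') / PUV u v')
    (hlocY : ∀ a a' b u u' v y, 0 < PUV u v → 0 < PUV u' v →
      (∑ x, P a b x y u v) / PUV u v = (∑ x, P a' b x y u' v) / PUV u' v)
    (u : U) (v : V) : IsNoSignalling (fun a b x y => P a b x y u v) := by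
  have hpos (a : α) (b : β) (h : PUV u v ≠ 0) : 0 < PUV u v :=
    (hiid a b u v ▸ sum_nonneg fun x _ => sum_nonneg fun y _ => hP a b x y u v).lt_of_ne' h
  have hzero (h : PUV u v = 0) (a : α) (b : β) (x y : Fin 2) : P a b x y u v = 0 :=
    le_antisymm (calc
      P a b x y u v ≤ ∑ y, P a b x y u v := single_le_sum (fun y _ => hP a b x y u v) (mem_univ y)
      _ ≤ ∑ x, ∑ y, P a b x y u v :=
        single_le_sum (f := fun x => ∑ y, P a b x y u v)
          (fun x _ => sum_nonneg fun y _ => hP a b x y u v) (mem_univ x)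
      _ = 0 := by rw [hiid, h]) (hP a b x y u v)
  refine ⟨fun a b x y => hP a b x y u v, fun a b b' x => ?_, fun a a' b y => ?_⟩
  · by_cases h : PUV u v = 0
    · simp [hzero h]
    · exact (div_left_inj' h).mp (hlocX a b b' u v v x (hpos a b h) (hpos a b h))
  · by_cases h : PUV u v = 0
    · simp [hzero h]
    · exact (div_left_inj' h).mp (hlocY a a' b u u v y (hpos a b h) (hpos a b h))

/-- a hidden variable model `P (a,b) (x,y,u,v)` with local hidden variables
`u : U`, `v : V` such that (i) the hidden variables are independent of the inputs
(their marginal is a fixed `PUV`), and (ii) the conditional distribution of `X` given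
`(a,b,u,v)` (defined whenever `PUV u v > 0`) depends only on `(a,u)`, and that of `Y` only
on `(b,v)`.  Then the joint distribution of `(X,U)` given `A = a` is within statistical
distance `I_N / 2` of `U_X × P_U` (which assigns `P_U(u)/2` to each `(x,u)`), and
symmetrically for `(Y,V)` given `B = b`, where `I_N` is the chained Bell quantity of the
bipartite marginal `P_{XY|AB}`. -/
theorem hidden_variable_local_part_trivial (N : ℕ) (hN : 0 < N)
    {U V : Type*} [Fintype U] [Fintype V]
    (P : Fin N → Fin N → Fin 2 → Fin 2 → U → V → ℝ) (PUV : U → V → ℝ)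
    (hprob : ∀ a b,
      IsProbDist (fun q : (Fin 2 × Fin 2) × U × V => P a b q.1.1 q.1.2 q.2.1 q.2.2))
    -- (i) hidden variables are independent of the inputs
    (hiid : ∀ a b u v, ∑ x, ∑ y, P a b x y u v = PUV u v)
    -- (ii) the conditional marginal of X depends only on (a, u) ...
    (hlocX : ∀ a b b' u v v' x, 0 < PUV u v → 0 < PUV u v' →
      (∑ y, P a b x y u v) / PUV u v = (∑ y, P a b' x y u v') / PUV u v')
    -- ... and that of Y only on (b, v)
    (hlocY : ∀ a a' b u u' v y, 0 < PUV u v → 0 < PUV u' v →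
      (∑ x, P a b x y u v) / PUV u v = (∑ x, P a' b x y u' v) / PUV u' v) :
    (∀ a b, statDist
        (fun p : Fin 2 × U => ∑ v, ∑ y, P a b p.1 y p.2 v)
        (fun p : Fin 2 × U => (∑ v, PUV p.2 v) / 2)
      ≤ chainedBell N hN (fun a b x y => ∑ u, ∑ v, P a b x y u v) / 2) ∧
    (∀ a b, statDist
        (fun p : Fin 2 × V => ∑ u, ∑ x, P a b x p.1 u p.2)
        (fun p : Fin 2 × V => (∑ u, PUV u p.2) / 2)
      ≤ chainedBell N hN (fun a b x y => ∑ u, ∑ v, P a b x y u v) / 2) := by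
  have hNS (u : U) (v : V) : IsNoSignalling (fun a b x y => P a b x y u v) :=
    isNoSignalling_of_local P PUV (fun a b x y u v => (hprob a b).1 ((x, y), (u, v)))
      hiid hlocX hlocY u v
  have hBell : chainedBell N hN (fun a b x y => ∑ u, ∑ v, P a b x y u v)
      = ∑ u, ∑ v, chainedBell N hN (fun a b x y => P a b x y u v) := by
    rw [chainedBell_sum hN univ (fun u a b x y => ∑ v, P a b x y u v)]
    exact sum_congr rfl fun u _ => chainedBell_sum hN univ (fun v a b x y => P a b x y u v)
  refine ⟨fun a b => ?_, fun a b => ?_⟩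
  · calc _ ≤ (∑ u, ∑ v, |∑ y, P a b 0 y u v - ∑ y, P a b 1 y u v|) / 2 :=
          statDist_le_sum_abs_sub (fun x u v => ∑ y, P a b x y u v) PUV fun u v =>
            (Fin.sum_univ_two (fun x => ∑ y, P a b x y u v)).symm.trans (hiid a b u v)
      _ ≤ _ := by
        rw [hBell]
        gcongr with u _ v _
        exact ((hNS u v).abs_bias_le_chainedBell hN a b).1
  · calc _ ≤ (∑ v, ∑ u, |∑ x, P a b x 0 u v - ∑ x, P a b x 1 u v|) / 2 :=
          statDist_le_sum_abs_sub (fun y v u => ∑ x, P a b x y u v) (fun v u => PUV u v)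
            fun v u => (Fin.sum_univ_two (fun y => ∑ x, P a b x y u v)).symm.trans
              (sum_comm.trans (hiid a b u v))
      _ ≤ _ := by
        rw [hBell, sum_comm]
        gcongr with u _ v _
        exact ((hNS u v).abs_bias_le_chainedBell hN a b).2

end
end

section
/- Let N ≥ 1, and consider a local hidden variable model: a finite set Λ with a probability distribution P_Λ, and deterministic response functions f : {0,2,...,2N−2} × Λ → {0,1} and g : {1,3,...,2N−1} × Λ → {0,1}, inducing the conditional distribution P_{XY|A=a,B=b}(x,y) = Σ_{λ: f(a,λ)=x, g(b,λ)=y} P_Λ(λ). Then the chained Bell quantity of this distribution satisfies I_N ≥ 1. -/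
open Finset

noncomputable section

lemma indic_ne {u v : Fin 2} (h : u ≠ v) :
    (∑ x : Fin 2, (if u = x ∧ v = 1 - x then (1:ℝ) else 0)) = 1 := by
  fin_cases u <;> fin_cases v <;> simp_all [Fin.sum_univ_two] <;> decide

lemma indic_eq {u v : Fin 2} (h : u = v) :
    (∑ x : Fin 2, (if u = x ∧ v = x then (1:ℝ) else 0)) = 1 := by
  subst h; fin_cases u <;> simp [Fin.sum_univ_two]

lemma point_bound (N : ℕ) (hN : 0 < N) (F G : Fin N → Fin 2) :
    1 ≤ (∑ a : Fin N, ∑ b : Fin N,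
      if (a : ℕ) = (b : ℕ) ∨ (a : ℕ) = (b : ℕ) + 1 then
        ∑ x : Fin 2, (if F a = x ∧ G b = 1 - x then (1:ℝ) else 0) else 0)
    + ∑ x : Fin 2, (if F ⟨0, hN⟩ = x ∧ G ⟨N - 1, by omega⟩ = x then (1:ℝ) else 0) := by
  have hnn : ∀ a b : Fin N, (0:ℝ) ≤
      (if (a : ℕ) = (b : ℕ) ∨ (a : ℕ) = (b : ℕ) + 1 then
        ∑ x : Fin 2, (if F a = x ∧ G b = 1 - x then (1:ℝ) else 0) else 0) := by
    intro a b
    split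
    · positivity
    · exact le_refl 0
  by_cases hc : F ⟨0, hN⟩ = G ⟨N - 1, by omega⟩
  · have h2 := indic_eq (u := F ⟨0, hN⟩) (v := G ⟨N - 1, by omega⟩) hc
    have h1 : (0:ℝ) ≤ ∑ a : Fin N, ∑ b : Fin N,
        if (a : ℕ) = (b : ℕ) ∨ (a : ℕ) = (b : ℕ) + 1 then
          ∑ x : Fin 2, (if F a = x ∧ G b = 1 - x then (1:ℝ) else 0) else 0 :=
      Finset.sum_nonneg fun a _ => Finset.sum_nonneg fun b _ => hnn a b
    linarith
  · have hex : ∃ a b : Fin N, ((a : ℕ) = (b : ℕ) ∨ (a : ℕ) = (b : ℕ) + 1) ∧ F a ≠ G b := by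
      by_contra hno
      push_neg at hno
      apply hc
      have key : ∀ k, (hk : k < N) → F ⟨0, hN⟩ = F ⟨k, hk⟩ := by
        intro k
        induction k with
        | zero => intro _; rfl
        | succ n ih =>
          intro hk
          have hn : n < N := by omega
          have h1 : F ⟨n, hn⟩ = G ⟨n, hn⟩ := hno _ _ (Or.inl rfl)
          have h2 : F ⟨n + 1, hk⟩ = G ⟨n, hn⟩ := hno _ _ (Or.inr rfl)
          rw [ih hn, h1, ← h2]
      rw [key (N - 1) (by omega)]
      exact hno _ _ (Or.inl rfl)
    obtain ⟨a0, b0, hcond, hne⟩ := hex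
    have hterm : (if (a0 : ℕ) = (b0 : ℕ) ∨ (a0 : ℕ) = (b0 : ℕ) + 1 then
        ∑ x : Fin 2, (if F a0 = x ∧ G b0 = 1 - x then (1:ℝ) else 0) else 0) = 1 := by
      rw [if_pos hcond, indic_ne hne]
    have hb : (1:ℝ) ≤ ∑ b : Fin N,
        (if (a0 : ℕ) = (b : ℕ) ∨ (a0 : ℕ) = (b : ℕ) + 1 then
          ∑ x : Fin 2, (if F a0 = x ∧ G b = 1 - x then (1:ℝ) else 0) else 0) := by
      have hb' := Finset.single_le_sum (fun b _ => hnn a0 b) (Finset.mem_univ b0)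
      rw [hterm] at hb'
      exact hb'
    have ha : (1:ℝ) ≤ ∑ a : Fin N, ∑ b : Fin N,
        (if (a : ℕ) = (b : ℕ) ∨ (a : ℕ) = (b : ℕ) + 1 then
          ∑ x : Fin 2, (if F a = x ∧ G b = 1 - x then (1:ℝ) else 0) else 0) :=
      le_trans hb (Finset.single_le_sum
        (fun a _ => Finset.sum_nonneg fun b _ => hnn a b) (Finset.mem_univ a0))
    have h2 : (0:ℝ) ≤ ∑ x : Fin 2,
        (if F ⟨0, hN⟩ = x ∧ G ⟨N - 1, by omega⟩ = x then (1:ℝ) else 0) := by positivity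
    linarith

/-- the chained Bell inequality `I_N ≥ 1`: for any local hidden variable model,
given by a finite set `Λ` with a distribution `PΛ` and deterministic response functions
`f` (for Alice) and `g` (for Bob), the induced conditional distribution
`P(x,y|a,b) = ∑_{λ : f a λ = x, g b λ = y} PΛ(λ)` satisfies `I_N ≥ 1`. -/
theorem chainedBell_ge_one_of_local_hidden_variables (N : ℕ) (hN : 0 < N)
    {Λ : Type*} [Fintype Λ] [DecidableEq Λ]
    (PΛ : Λ → ℝ) (hPΛ : IsProbDist PΛ)
    (f : Fin N → Λ → Fin 2) (g : Fin N → Λ → Fin 2) :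
    1 ≤ chainedBell N hN
      (fun a b x y => ∑ l : Λ, if f a l = x ∧ g b l = y then PΛ l else 0) := by
  obtain ⟨hpos, hsum⟩ := hPΛ
  have reorg : chainedBell N hN
      (fun a b x y => ∑ l : Λ, if f a l = x ∧ g b l = y then PΛ l else 0)
      = ∑ l : Λ, PΛ l * ((∑ a : Fin N, ∑ b : Fin N,
          if (a : ℕ) = (b : ℕ) ∨ (a : ℕ) = (b : ℕ) + 1 then
            ∑ x : Fin 2, (if f a l = x ∧ g b l = 1 - x then (1:ℝ) else 0) else 0)
        + ∑ x : Fin 2, (if f ⟨0, hN⟩ l = x ∧ g ⟨N - 1, by omega⟩ l = x then (1:ℝ) else 0)) := by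
    unfold chainedBell
    simp only [mul_add, mul_ite, mul_one, mul_zero, Finset.mul_sum, Finset.sum_add_distrib]
    congr 1
    · refine Eq.trans (Finset.sum_congr rfl fun a _ => ?_) Finset.sum_comm
      refine Eq.trans (Finset.sum_congr rfl fun b _ => ?_) Finset.sum_comm
      split
      · exact Finset.sum_comm
      · simp
    · exact Finset.sum_comm
  rw [reorg]
  calc (1:ℝ) = ∑ l : Λ, PΛ l := hsum.symm
    _ ≤ _ := Finset.sum_le_sum fun l _ =>
        le_mul_of_one_le_right (hpos l)
          (point_bound N hN (fun a => f a l) (fun b => g b l))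

end
end

section
/- Let N ≥ 1, let X, Y ∈ {0,1} be binary outcomes, A ∈ {0,2,...,2N−2}, B ∈ {1,3,...,2N−1} inputs, and let P_{XY|AB} be a bipartite non-signaling conditional distribution. Then I_N ≥ D(P̄_{X|A=0}, P_{X|A=0}), where P_{X|A=0} is the marginal output distribution of the first party on input 0, and P̄_{X|A=0} denotes its flip (P̄(x) = P(x̄)). That is, the chained Bell quantity upper bounds the statistical distance between the first party's output distribution on input 0 and its bit-flip. -/
open Finset

noncomputable section

/-- For a bipartite non-signaling conditional distribution with binary outcomes,
the chained Bell quantity upper bounds the statistical distance between the first party's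
output distribution on input `0` and its bit-flip:
`I_N ≥ D(P̄_{X|A=0}, P_{X|A=0})`, where `P̄(x) = P(x̄)` with `x̄ = 1 - x`.
(By non-signaling, `P_{X|A=0}(x) = ∑_y P(x,y|0,b)` does not depend on `b`; the bound is stated
for every `b`.) -/
theorem chainedBell_ge_statDist_flip (N : ℕ) (hN : 0 < N)
    (P : Fin N → Fin N → Fin 2 → Fin 2 → ℝ)
    (hprob : ∀ a b, IsProbDist (fun xy : Fin 2 × Fin 2 => P a b xy.1 xy.2))
    (hnsX : ∀ a b b' x, ∑ y, P a b x y = ∑ y, P a b' x y)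
    (hnsY : ∀ a a' b y, ∑ x, P a b x y = ∑ x, P a' b x y) :
    ∀ b, statDist (fun x => ∑ y, P ⟨0, hN⟩ b (1 - x) y) (fun x => ∑ y, P ⟨0, hN⟩ b x y)
      ≤ chainedBell N hN P := by
  intro b
  have e0 : (1 : Fin 2) - 0 = 1 := rfl
  have e1 : (1 : Fin 2) - 1 = 0 := rfl
  have hPnn : ∀ (a c : Fin N) (x y : Fin 2), 0 ≤ P a c x y := fun a c x y => (hprob a c).1 (x, y)
  have hPsum : ∀ a c : Fin N, P a c 0 0 + P a c 0 1 + P a c 1 0 + P a c 1 1 = 1 := by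
    intro a c
    have h := (hprob a c).2
    rw [Fintype.sum_prod_type] at h
    rw [Fin.sum_univ_two] at h
    simp only [Fin.sum_univ_two] at h
    linarith
  -- generic edge bound
  have key1 : ∀ a c : Fin N, |(∑ y, P a c 0 y) - (∑ x, P a c x 0)| ≤ ∑ x : Fin 2, P a c x (1 - x) := by
    intro a c
    have h01 := hPnn a c 0 1
    have h10 := hPnn a c 1 0
    simp only [Fin.sum_univ_two, e0, e1]
    rw [abs_le]
    constructor <;> linarith
  set A0 : Fin N := ⟨0, hN⟩ with hA0
  set BL : Fin N := ⟨N - 1, by omega⟩ with hBLdef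
  -- marginals as functions of natural-number index
  set q : ℕ → ℝ := fun i => if h : i < N then ∑ y, P ⟨i, h⟩ ⟨i, h⟩ 0 y else 0 with hqdef
  set r : ℕ → ℝ := fun i => if h : i < N then ∑ x, P ⟨i, h⟩ ⟨i, h⟩ x 0 else 0 with hrdef
  set F : Fin N → Fin N → ℝ := fun a c => ∑ x : Fin 2, P a c x (1 - x) with hFdef
  set G : ℕ → ℝ := fun i => if h : i + 1 < N then F ⟨i + 1, h⟩ ⟨i, Nat.lt_of_succ_lt h⟩ else 0
    with hGdef
  set D : ℕ → ℝ := fun i => if h : i < N then F ⟨i, h⟩ ⟨i, h⟩ else 0 with hDdef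
  -- chainedBell double sum computation
  have hdiag : (∑ a : Fin N, ∑ c : Fin N, if a = c then F a c else 0) = ∑ i ∈ range N, D i := by
    have : (∑ a : Fin N, ∑ c : Fin N, if a = c then F a c else 0) = ∑ a : Fin N, D (a : ℕ) := by
      apply Finset.sum_congr rfl
      intro a _
      rw [Finset.sum_ite_eq]
      simp [hDdef, a.isLt]
    rw [this, Fin.sum_univ_eq_sum_range]
  have hoff : (∑ a : Fin N, ∑ c : Fin N, if (a : ℕ) = (c : ℕ) + 1 then F a c else 0)
      = ∑ i ∈ range N, G i := by
    rw [Finset.sum_comm]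
    have : ∀ c : Fin N, (∑ a : Fin N, if (a : ℕ) = (c : ℕ) + 1 then F a c else 0) = G (c : ℕ) := by
      intro c
      by_cases h : (c : ℕ) + 1 < N
      · rw [hGdef]
        simp only [dif_pos h]
        rw [Finset.sum_eq_single (⟨(c : ℕ) + 1, h⟩ : Fin N)]
        · simp
        · intro a _ ha
          rw [if_neg]
          intro hc
          exact ha (Fin.ext hc)
        · simp
      · rw [hGdef]
        simp only [dif_neg h]
        apply Finset.sum_eq_zero
        intro a _
        rw [if_neg]
        have := a.isLt
        omega
    rw [Finset.sum_congr rfl (fun c _ => this c), Fin.sum_univ_eq_sum_range]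
  have hsplit : (∑ a : Fin N, ∑ c : Fin N,
      if (a : ℕ) = (c : ℕ) ∨ (a : ℕ) = (c : ℕ) + 1 then F a c else 0)
      = (∑ i ∈ range N, D i) + ∑ i ∈ range N, G i := by
    rw [← hdiag, ← hoff, ← Finset.sum_add_distrib]
    apply Finset.sum_congr rfl
    intro a _
    rw [← Finset.sum_add_distrib]
    apply Finset.sum_congr rfl
    intro c _
    by_cases h1 : (a : ℕ) = (c : ℕ) <;> by_cases h2 : (a : ℕ) = (c : ℕ) + 1
    · omega
    · simp [h1, h2, Fin.ext_iff]
    · simp [h1, h2, Fin.ext_iff]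
    · simp [h1, h2, Fin.ext_iff]
  have hCB : chainedBell N hN P = (∑ i ∈ range N, D i) + (∑ i ∈ range N, G i)
      + ∑ x : Fin 2, P A0 BL x x := by
    rw [chainedBell, hsplit]
  -- the last G term vanishes
  have hGsum : ∑ i ∈ range N, G i = ∑ i ∈ range (N - 1), G i := by
    obtain ⟨M, rfl⟩ : ∃ M, N = M + 1 := ⟨N - 1, by omega⟩
    rw [Finset.sum_range_succ]
    simp [hGdef]
  -- telescoping identity
  have htel : q 0 - r (N - 1) = (∑ i ∈ range N, (q i - r i))
      - ∑ i ∈ range (N - 1), (q (i + 1) - r i) := by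
    obtain ⟨M, rfl⟩ : ∃ M, N = M + 1 := ⟨N - 1, by omega⟩
    simp only [Nat.add_sub_cancel]
    rw [Finset.sum_sub_distrib, Finset.sum_sub_distrib, Finset.sum_range_succ' q M,
      Finset.sum_range_succ r M]
    ring
  -- per-term bounds
  have hbdD : ∀ i ∈ range N, |q i - r i| ≤ D i := by
    intro i hi
    rw [Finset.mem_range] at hi
    simp only [hqdef, hrdef, hDdef, dif_pos hi]
    exact key1 _ _
  have hbdG : ∀ i ∈ range (N - 1), |q (i + 1) - r i| ≤ G i := by
    intro i hi
    rw [Finset.mem_range] at hi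
    have h1 : i + 1 < N := by omega
    have h0 : i < N := by omega
    simp only [hqdef, hrdef, hGdef, dif_pos h1, dif_pos h0]
    have e1' : (∑ y, P ⟨i + 1, h1⟩ ⟨i + 1, h1⟩ 0 y) = ∑ y, P ⟨i + 1, h1⟩ ⟨i, h0⟩ 0 y :=
      hnsX _ _ _ _
    have e2' : (∑ x, P ⟨i, h0⟩ ⟨i, h0⟩ x 0) = ∑ x, P ⟨i + 1, h1⟩ ⟨i, h0⟩ x 0 :=
      hnsY _ _ _ _
    rw [e1', e2']
    exact key1 _ _
  -- the wrap-around bound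
  have hq0 : q 0 = ∑ y, P A0 BL 0 y := by
    simp only [hqdef, dif_pos hN]
    exact hnsX _ _ _ _
  have hrL : r (N - 1) = ∑ x, P A0 BL x 0 := by
    have h : N - 1 < N := by omega
    simp only [hrdef, dif_pos h]
    exact hnsY _ _ _ _
  have hwrap : |q 0 + r (N - 1) - 1| ≤ ∑ x : Fin 2, P A0 BL x x := by
    rw [hq0, hrL]
    have hs := hPsum A0 BL
    have h00 := hPnn A0 BL 0 0
    have h11 := hPnn A0 BL 1 1
    simp only [Fin.sum_univ_two]
    rw [abs_le]
    constructor <;> linarith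
  -- chain bound
  have hchain : |q 0 - r (N - 1)| ≤ (∑ i ∈ range N, D i) + ∑ i ∈ range (N - 1), G i := by
    rw [htel]
    calc |(∑ i ∈ range N, (q i - r i)) - ∑ i ∈ range (N - 1), (q (i + 1) - r i)|
        ≤ |∑ i ∈ range N, (q i - r i)| + |∑ i ∈ range (N - 1), (q (i + 1) - r i)| :=
          abs_sub _ _
      _ ≤ (∑ i ∈ range N, |q i - r i|) + ∑ i ∈ range (N - 1), |q (i + 1) - r i| := by
          gcongr <;> exact Finset.abs_sum_le_sum_abs _ _
      _ ≤ (∑ i ∈ range N, D i) + ∑ i ∈ range (N - 1), G i := by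
          gcongr with i hi i hi
          · exact hbdD i hi
          · exact hbdG i hi
  -- compute the statistical distance
  have hSsum : (∑ y, P A0 b 0 y) + ∑ y, P A0 b 1 y = 1 := by
    have hs := hPsum A0 b
    simp only [Fin.sum_univ_two]
    linarith
  have hS0 : (∑ y, P A0 b 0 y) = q 0 := by
    simp only [hqdef, dif_pos hN]
    exact hnsX _ _ _ _
  have hSD : statDist (fun x => ∑ y, P A0 b (1 - x) y) (fun x => ∑ y, P A0 b x y)
      = |2 * q 0 - 1| := by
    rw [statDist]
    rw [Fin.sum_univ_two]
    simp only [e0, e1]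
    rw [abs_sub_comm (∑ y, P A0 b 1 y)]
    have : (∑ y, P A0 b 0 y) - ∑ y, P A0 b 1 y = 2 * q 0 - 1 := by
      rw [← hS0]; linarith
    rw [this]
    ring
  rw [hSD, hCB, hGsum]
  have hfin : 2 * q 0 - 1 = (q 0 - r (N - 1)) + (q 0 + r (N - 1) - 1) := by ring
  calc |2 * q 0 - 1| ≤ |q 0 - r (N - 1)| + |q 0 + r (N - 1) - 1| := by
        rw [hfin]; exact abs_add_le _ _
    _ ≤ ((∑ i ∈ range N, D i) + ∑ i ∈ range (N - 1), G i) + ∑ x : Fin 2, P A0 BL x x := by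
        exact add_le_add hchain hwrap

end
end
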